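/- For every nonempty admissible composition s = (s_1, …, s_r) (with s_1 ≥ 2), the Hurwitz multizeta function He^{s} is not a rational function: there is no rational function G with complex coefficients such that He^{s}(z) = G(z) for all z ∈ ℂ outside the negative integers and outside the poles of G. -/

import Mathlib

/-- Membership in the domain `Ω = ℂ ∖ {-1, -2, -3, …}`. -/
def InOmega (z : ℂ) : Prop := ∀ k : ℕ, z ≠ -((k : ℂ) + 1)

/-- The Hurwitz multizeta function `He^{s₁,…,s_r}(z) = ∑_{0 < n_r < ⋯ < n₁} ∏ 1/(n_i+z)^{s_i}`,
indexed by strictly decreasing tuples of positive integers. For `s = []` this is the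
constant function `1`. -/
noncomputable def He (s : List ℕ) (z : ℂ) : ℂ :=
  ∑' n : {n : Fin s.length → ℕ // StrictAnti n ∧ ∀ i, 0 < n i},
    ∏ i, 1 / (((n.1 i : ℂ) + z) ^ s.get i)

/-- A composition `s = (s₁, …, s_r)` is admissible if all parts are positive and
the first part (if any) is at least 2. -/
def Admissible (s : List ℕ) : Prop :=
  (∀ k ∈ s, 1 ≤ k) ∧ ∀ k ∈ s.head?, 2 ≤ k

/-!
Shifting every index down by one splits the series into the terms with `n_r ≥ 2` and those with
`n_r = 1`, which gives the difference equation
`He^s(z) = He^s(z+1) + He^{s'}(z+1) / (z+1)^{s_r}`, with `s'` the composition `s` without its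
last part. If `He^s` agreed with a rational function on large reals, then so would
`He^{s'}(z) = (He^s(z-1) - He^s(z)) z^{s_r}`; descending to length one, some `G = P/Q` in lowest
terms would satisfy `G(z) - G(z+1) = (z+1)^{-k}`. Then `Q(-1) Q(0) = 0`, and a point `w` at
which exactly one of `Q(w)`, `Q(w + 1)` vanishes must be `-1`. Applied to the roots of `Q` of
largest and of smallest real part this makes the largest one `-1` and the smallest one `0`,
which is absurd.
-/

open Filter Polynomial

theorem Fin.strictAnti_snoc {α : Type*} [Preorder α] {n : ℕ} {f : Fin n → α} {a : α}
    (hf : StrictAnti f) (ha : ∀ i, a < f i) : StrictAnti (Fin.snoc f a : Fin (n + 1) → α) := by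
  intro i j hij
  induction j using Fin.lastCases with
  | last =>
    induction i using Fin.lastCases with
    | last => exact absurd hij (lt_irrefl _)
    | cast i => simpa using ha i
  | cast j =>
    induction i using Fin.lastCases with
    | last => exact absurd hij (not_lt.2 (Fin.le_last _))
    | cast i => simpa using hf (Fin.castSucc_lt_castSucc_iff.1 hij)

theorem summable_prod_natCast_rpow {k : ℕ} {p : ℝ} (hp : p < -1) :
    Summable fun n : Fin k → ℕ => ∏ i, (n i : ℝ) ^ p := by
  induction k with
  | zero => exact .of_finite
  | succ k ih =>
    have h := (Real.summable_nat_rpow.2 hp).mul_of_nonneg ih (fun _ => by positivity)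
      (fun _ => by positivity)
    refine (h.comp_injective (Fin.consEquiv fun _ => ℕ).symm.injective).congr fun n => ?_
    simp [Fin.prod_univ_succ, Fin.consEquiv, Fin.tail]

theorem prod_rpow_one_add_inv_le {r : ℕ} {n : Fin (r + 1) → ℕ} (hn : Antitone n) :
    ∏ i, (n i : ℝ) ^ (1 + ((r + 1 : ℕ) : ℝ)⁻¹) ≤ n 0 * ∏ i, (n i : ℝ) :=
  calc ∏ i, (n i : ℝ) ^ (1 + ((r + 1 : ℕ) : ℝ)⁻¹)
      = ∏ i, ((n i : ℝ) * (n i : ℝ) ^ ((r + 1 : ℕ) : ℝ)⁻¹) := by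
        refine Finset.prod_congr rfl fun i _ => ?_
        rw [Real.rpow_add' (by positivity) (by positivity), Real.rpow_one]
    _ ≤ ∏ i, ((n i : ℝ) * (n 0 : ℝ) ^ ((r + 1 : ℕ) : ℝ)⁻¹) := by
        gcongr with i
        exact_mod_cast hn (Fin.zero_le i)
    _ = n 0 * ∏ i, (n i : ℝ) := by
        rw [Finset.prod_mul_distrib, Finset.prod_const, Finset.card_univ, Fintype.card_fin,
          Real.rpow_inv_natCast_pow (by positivity) (by positivity), mul_comm]

theorem mul_prod_le_prod_pow {r : ℕ} {n c : Fin (r + 1) → ℕ} (hn : ∀ i, 0 < n i)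
    (hc : ∀ i, 1 ≤ c i) (h0 : 2 ≤ c 0) :
    n 0 * ∏ i, n i ≤ ∏ i, n i ^ c i := by
  rw [Fin.prod_univ_succ, Fin.prod_univ_succ, ← mul_assoc, ← sq]
  gcongr with i
  · exact hn 0
  · exact Nat.le_self_pow (by have := hc i.succ; omega) _

abbrev PosStrictAnti (r : ℕ) := {n : Fin r → ℕ // StrictAnti n ∧ ∀ i, 0 < n i}

namespace PosStrictAnti

variable {r : ℕ}

theorem last_le (n : PosStrictAnti (r + 1)) (i : Fin (r + 1)) : n.1 (Fin.last r) ≤ n.1 i :=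
  n.2.1.antitone (Fin.le_last i)

def succ (n : PosStrictAnti r) : PosStrictAnti r :=
  ⟨fun i => n.1 i + 1, fun _ _ h => Nat.succ_lt_succ (n.2.1 h), fun _ => Nat.succ_pos _⟩

def snocOne (m : PosStrictAnti r) : PosStrictAnti (r + 1) :=
  ⟨Fin.snoc (fun i => m.1 i + 1) 1,
    Fin.strictAnti_snoc (succ m).2.1 fun i => Nat.succ_lt_succ (m.2.2 i),
    Fin.lastCases (by simp) fun i => by simp⟩

theorem bijective_sumElim_succ_snocOne :
    Function.Bijective (Sum.elim (succ (r := r + 1)) snocOne) := by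
  refine ⟨Function.Injective.sumElim ?_ ?_ ?_, ?_⟩
  · intro n n' h
    ext i
    simpa [succ] using congrFun (congrArg Subtype.val h) i
  · intro m m' h
    ext i
    simpa [snocOne] using congrFun (congrArg Subtype.val h) i.castSucc
  · intro n m h
    have := congrFun (congrArg Subtype.val h) (Fin.last r)
    simp [succ, snocOne] at this
    exact (n.2.2 _).ne' this
  · intro n
    by_cases h : 2 ≤ n.1 (Fin.last r)
    · refine ⟨.inl ⟨fun i => n.1 i - 1, fun i j hij => ?_, fun i => ?_⟩, ?_⟩
      · have := n.2.1 hij; have := n.last_le j; simp only; omega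
      · have := n.last_le i; simp only; omega
      · ext i; have := n.last_le i; simp [succ]; omega
    · refine ⟨.inr ⟨fun i => n.1 i.castSucc - 1, fun i j hij => ?_, fun i => ?_⟩, ?_⟩
      · have := n.2.1 (Fin.castSucc_lt_castSucc_iff.2 hij); have := n.2.2 j.castSucc
        simp only; omega
      · have := n.2.1 (Fin.castSucc_lt_last i); have := n.2.2 (Fin.last r)
        simp only; omega
      · have := n.2.2 (Fin.last r)
        ext i
        induction i using Fin.lastCases with
        | last => simp [snocOne]; omega
        | cast i => have := n.2.1 (Fin.castSucc_lt_last i); simp [snocOne]; omega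

end PosStrictAnti

section

variable {r : ℕ}

noncomputable def hurwitzTerm (c : Fin r → ℕ) (z : ℂ) (n : Fin r → ℕ) : ℂ :=
  ∏ i, 1 / ((n i : ℂ) + z) ^ c i

noncomputable def hurwitzMultizeta (c : Fin r → ℕ) (z : ℂ) : ℂ :=
  ∑' n : PosStrictAnti r, hurwitzTerm c z n.1

theorem he_eq_hurwitzMultizeta (s : List ℕ) : He s = hurwitzMultizeta s.get := rfl

theorem hurwitzMultizeta_fin_zero (c : Fin 0 → ℕ) (z : ℂ) : hurwitzMultizeta c z = 1 := by
  have : Unique (PosStrictAnti 0) := ⟨⟨⟨finZeroElim, fun i => i.elim0, fun i => i.elim0⟩⟩,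
    fun _ => Subtype.ext (funext fun i => i.elim0)⟩
  simp [hurwitzMultizeta, hurwitzTerm]

theorem hurwitzTerm_succ (c : Fin r → ℕ) (z : ℂ) (n : PosStrictAnti r) :
    hurwitzTerm c z n.succ.1 = hurwitzTerm c (z + 1) n.1 := by
  simp only [hurwitzTerm, PosStrictAnti.succ]
  push_cast
  simp only [add_assoc, add_comm 1 z]

theorem hurwitzTerm_snocOne (c : Fin (r + 1) → ℕ) (z : ℂ) (m : PosStrictAnti r) :
    hurwitzTerm c z m.snocOne.1 =
      hurwitzTerm (Fin.init c) (z + 1) m.1 / (z + 1) ^ c (Fin.last r) := by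
  simp only [hurwitzTerm, PosStrictAnti.snocOne, Fin.prod_univ_castSucc, Fin.snoc_castSucc,
    Fin.snoc_last, Fin.init]
  push_cast
  simp only [add_assoc, add_comm 1 z]
  ring

theorem hurwitzMultizeta_eq_shift_add (c : Fin (r + 1) → ℕ) (z : ℂ)
    (hc : Summable fun n : PosStrictAnti (r + 1) => hurwitzTerm c (z + 1) n.1)
    (hc' : Summable fun m : PosStrictAnti r => hurwitzTerm (Fin.init c) (z + 1) m.1) :
    hurwitzMultizeta c z = hurwitzMultizeta c (z + 1) +
      hurwitzMultizeta (Fin.init c) (z + 1) / (z + 1) ^ c (Fin.last r) := by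
  let e := Equiv.ofBijective _ (PosStrictAnti.bijective_sumElim_succ_snocOne (r := r))
  have hl : (fun n => hurwitzTerm c z (e n).1) ∘ Sum.inl = fun n => hurwitzTerm c (z + 1) n.1 :=
    funext (hurwitzTerm_succ c z)
  have hr : (fun n => hurwitzTerm c z (e n).1) ∘ Sum.inr =
      fun m => hurwitzTerm (Fin.init c) (z + 1) m.1 / (z + 1) ^ c (Fin.last r) :=
    funext (hurwitzTerm_snocOne c z)
  rw [hurwitzMultizeta, ← e.tsum_eq, Summable.tsum_sum (hl ▸ hc) (hr ▸ hc'.div_const _),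
    hurwitzMultizeta, hurwitzMultizeta, ← tsum_div_const]
  exact congrArg₂ _ (congrArg tsum hl) (congrArg tsum hr)

theorem norm_hurwitzTerm_le (c : Fin r → ℕ) {z : ℂ} (hz : 0 ≤ z.re)
    (n : PosStrictAnti r) : ‖hurwitzTerm c z n.1‖ ≤ (∏ i, (n.1 i : ℝ) ^ c i)⁻¹ := by
  rw [hurwitzTerm, norm_prod, ← Finset.prod_inv_distrib]
  refine Finset.prod_le_prod (fun _ _ => norm_nonneg _) fun i _ => ?_
  rw [norm_div, norm_one, norm_pow, one_div]
  have hn : (0 : ℝ) < n.1 i := by exact_mod_cast n.2.2 i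
  gcongr
  calc (n.1 i : ℝ) ≤ ((n.1 i : ℂ) + z).re := by simpa using hz
    _ ≤ ‖(n.1 i : ℂ) + z‖ := Complex.re_le_norm _

theorem summable_hurwitzTerm {c : Fin (r + 1) → ℕ} (hc : ∀ i, 1 ≤ c i) (h0 : 2 ≤ c 0)
    {z : ℂ} (hz : 0 ≤ z.re) :
    Summable fun n : PosStrictAnti (r + 1) => hurwitzTerm c z n.1 := by
  set q : ℝ := 1 + ((r + 1 : ℕ) : ℝ)⁻¹
  have hq : -q < -1 := by
    simp only [q]; linarith [show (0 : ℝ) < ((r + 1 : ℕ) : ℝ)⁻¹ by positivity]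
  refine .of_norm_bounded ((summable_prod_natCast_rpow hq).subtype _) fun n => ?_
  have hpos : ∀ i, (0 : ℝ) < n.1 i := fun i => by exact_mod_cast n.2.2 i
  calc ‖hurwitzTerm c z n.1‖ ≤ (∏ i, (n.1 i : ℝ) ^ c i)⁻¹ := norm_hurwitzTerm_le c hz n
    _ ≤ (∏ i, (n.1 i : ℝ) ^ q)⁻¹ := by
        refine inv_anti₀ (Finset.prod_pos fun i _ => Real.rpow_pos_of_pos (hpos i) q) ?_
        refine (prod_rpow_one_add_inv_le n.2.1.antitone).trans ?_
        exact_mod_cast mul_prod_le_prod_pow n.2.2 hc h0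
    _ = ∏ i, (n.1 i : ℝ) ^ (-q) := by
        rw [← Finset.prod_inv_distrib]
        exact Finset.prod_congr rfl fun i _ => (Real.rpow_neg (hpos i).le _).symm

theorem eventually_hurwitzMultizeta_eq_shift_add {c : Fin (r + 1) → ℕ}
    (hc : ∀ i, 1 ≤ c i) (h0 : 2 ≤ c 0) :
    ∀ᶠ x : ℝ in atTop, hurwitzMultizeta c x = hurwitzMultizeta c (x + 1) +
      hurwitzMultizeta (Fin.init c) (x + 1) / ((x : ℂ) + 1) ^ c (Fin.last r) := by
  filter_upwards [eventually_ge_atTop 0] with x hx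
  have hre : 0 ≤ ((x : ℂ) + 1).re := by simp; linarith
  refine hurwitzMultizeta_eq_shift_add c x (summable_hurwitzTerm hc h0 hre) ?_
  cases r with
  | zero => exact .of_finite
  | succ r => exact summable_hurwitzTerm (c := Fin.init c) (fun i => hc _) h0 hre

end

namespace Polynomial

theorem eventually_eval_ofReal_ne_zero {Q : ℂ[X]} (hQ : Q ≠ 0) :
    ∀ᶠ x : ℝ in atTop, Q.eval (x : ℂ) ≠ 0 :=
  atTop_le_cofinite ((finite_setOfPred_isRoot hQ).preimage
    Complex.ofReal_injective.injOn).eventually_cofinite_notMem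

theorem eq_of_eventually_eval_ofReal_eq {A B : ℂ[X]}
    (h : ∀ᶠ x : ℝ in atTop, A.eval (x : ℂ) = B.eval (x : ℂ)) : A = B := by
  by_contra hne
  obtain ⟨x, hx, hx'⟩ := (h.and (eventually_eval_ofReal_ne_zero (sub_ne_zero.2 hne))).exists
  exact hx' (by simp [hx])

theorem eval_ne_zero_of_isCoprime {P Q : ℂ[X]} (hPQ : IsCoprime P Q) {w : ℂ}
    (hw : Q.eval w = 0) : P.eval w ≠ 0 := by
  simpa using (aeval_ne_zero_of_isCoprime hPQ w).resolve_right (by simpa using hw)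

theorem eq_neg_one_of_xor_isRoot {P Q : ℂ[X]} {k : ℕ} (hPQ : IsCoprime P Q)
    (hid : (P * Q.comp (X + 1) - P.comp (X + 1) * Q) * (X + 1) ^ k = Q * Q.comp (X + 1))
    {w : ℂ} (hw : Xor (Q.eval w = 0) (Q.eval (w + 1) = 0)) : w = -1 := by
  have hw' := congrArg (eval w) hid
  simp only [eval_mul, eval_sub, eval_pow, eval_add, eval_X, eval_one, eval_comp] at hw'
  have hQQ : Q.eval w * Q.eval (w + 1) = 0 := by rcases hw with ⟨h, -⟩ | ⟨h, -⟩ <;> simp [h]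
  rw [hQQ] at hw'
  have hD : P.eval w * Q.eval (w + 1) - P.eval (w + 1) * Q.eval w ≠ 0 := by
    rcases hw with ⟨h, h'⟩ | ⟨h, h'⟩
    · simpa [h] using And.intro (eval_ne_zero_of_isCoprime hPQ h) h'
    · simpa [h] using And.intro (eval_ne_zero_of_isCoprime hPQ h) h'
  exact eq_neg_of_add_eq_zero_left (pow_eq_zero_iff'.1 ((mul_eq_zero.1 hw').resolve_left hD)).1

/-- `P / Q - P(X + 1) / Q(X + 1) ≠ 1 / (X + 1) ^ k`, with the denominators cleared. -/
theorem sub_comp_mul_pow_ne {P Q : ℂ[X]} {k : ℕ} (hk : k ≠ 0) (hQ : Q ≠ 0)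
    (hPQ : IsCoprime P Q) :
    (P * Q.comp (X + 1) - P.comp (X + 1) * Q) * (X + 1) ^ k ≠ Q * Q.comp (X + 1) := by
  intro hid
  have hroots : Q.roots.toFinset.Nonempty := by
    have h := congrArg (eval (-1)) hid
    simp only [eval_mul, eval_sub, eval_pow, eval_add, eval_X, eval_one, eval_comp,
      neg_add_cancel, zero_pow hk, mul_zero, zero_eq_mul] at h
    rcases h with h | h
    · exact ⟨-1, by simp [hQ, h]⟩
    · exact ⟨0, by simpa [hQ] using h⟩
  have mem : ∀ w, w ∈ Q.roots.toFinset ↔ Q.eval w = 0 := by simp [hQ]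
  obtain ⟨β, hβ, hβmax⟩ := Q.roots.toFinset.exists_max_image Complex.re hroots
  obtain ⟨γ, hγ, hγmin⟩ := Q.roots.toFinset.exists_min_image Complex.re hroots
  have hβ' : β = -1 := by
    refine eq_neg_one_of_xor_isRoot hPQ hid (.inl ⟨(mem β).1 hβ, fun h => ?_⟩)
    have := hβmax _ ((mem _).2 h)
    norm_num at this
  have hγ' : γ - 1 = -1 := by
    refine eq_neg_one_of_xor_isRoot hPQ hid (.inr ⟨by simpa using (mem γ).1 hγ, fun h => ?_⟩)
    have := hγmin _ ((mem _).2 h)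
    norm_num at this
  have := hγmin β hβ
  norm_num [hβ', show γ = 0 by linear_combination hγ'] at this

end Polynomial

/-- Agreement is only asked at large real arguments, where the series converges by a crude bound;
there `Q` has no roots, so the junk value `P x / 0 = 0` plays no role. -/
def EventuallyRational (f : ℂ → ℂ) : Prop :=
  ∃ P Q : ℂ[X], Q ≠ 0 ∧ ∀ᶠ x : ℝ in atTop, f x = P.eval (x : ℂ) / Q.eval (x : ℂ)

theorem eventuallyRational_eval (P : ℂ[X]) : EventuallyRational fun z => P.eval z :=
  ⟨P, 1, one_ne_zero, .of_forall fun x => by simp⟩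

namespace EventuallyRational

variable {f g : ℂ → ℂ}

theorem congr (hf : EventuallyRational f) (h : ∀ᶠ x : ℝ in atTop, f x = g x) :
    EventuallyRational g := by
  obtain ⟨P, Q, hQ, hf⟩ := hf
  exact ⟨P, Q, hQ, by filter_upwards [hf, h] with x hx hx' using hx' ▸ hx⟩

theorem sub (hf : EventuallyRational f) (hg : EventuallyRational g) :
    EventuallyRational (f - g) := by
  obtain ⟨P, Q, hQ, hf⟩ := hf
  obtain ⟨P', Q', hQ', hg⟩ := hg
  refine ⟨P * Q' - Q * P', Q * Q', mul_ne_zero hQ hQ', ?_⟩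
  filter_upwards [hf, hg, eventually_eval_ofReal_ne_zero hQ, eventually_eval_ofReal_ne_zero hQ']
    with x hx hx' hQx hQx'
  simp [hx, hx', div_sub_div _ _ hQx hQx']

theorem mul (hf : EventuallyRational f) (hg : EventuallyRational g) :
    EventuallyRational (f * g) := by
  obtain ⟨P, Q, hQ, hf⟩ := hf
  obtain ⟨P', Q', hQ', hg⟩ := hg
  refine ⟨P * P', Q * Q', mul_ne_zero hQ hQ', ?_⟩
  filter_upwards [hf, hg] with x hx hx'
  simp [hx, hx', div_mul_div_comm]

theorem comp_add_ofReal (hf : EventuallyRational f) (a : ℝ) :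
    EventuallyRational fun z => f (z + a) := by
  obtain ⟨P, Q, hQ, hf⟩ := hf
  refine ⟨P.comp (X + C (a : ℂ)), Q.comp (X + C (a : ℂ)), comp_X_add_C_ne_zero_iff.2 hQ, ?_⟩
  filter_upwards [(tendsto_atTop_add_const_right atTop a tendsto_id).eventually hf] with x hx
  simpa using hx

theorem exists_isCoprime (hf : EventuallyRational f) :
    ∃ P Q : ℂ[X], IsCoprime P Q ∧ Q ≠ 0 ∧
      ∀ᶠ x : ℝ in atTop, f x = P.eval (x : ℂ) / Q.eval (x : ℂ) := by
  obtain ⟨P, Q, hQ, hf⟩ := hf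
  have hg : gcd P Q ≠ 0 := gcd_ne_zero_of_right hQ
  have hP := EuclideanDomain.mul_div_cancel' hg (gcd_dvd_left P Q)
  have hQ' := EuclideanDomain.mul_div_cancel' hg (gcd_dvd_right P Q)
  refine ⟨P / gcd P Q, Q / gcd P Q, isCoprime_div_gcd_div_gcd hQ,
    fun h => hQ (by rw [← hQ', h, mul_zero]), ?_⟩
  filter_upwards [hf, eventually_eval_ofReal_ne_zero hg] with x hx hgx
  rw [hx, ← mul_div_mul_left (eval (x : ℂ) (P / gcd P Q)) _ hgx, ← eval_mul, ← eval_mul, hP,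
    hQ']

theorem of_eventually_eq_shift_add {t : ℕ} (hf : EventuallyRational f)
    (h : ∀ᶠ x : ℝ in atTop, f x = f (x + 1) + g (x + 1) / ((x : ℂ) + 1) ^ t) :
    EventuallyRational g := by
  refine (((hf.comp_add_ofReal (-1)).sub hf).mul (eventuallyRational_eval (X ^ t))).congr ?_
  filter_upwards [(tendsto_atTop_add_const_right atTop (-1) tendsto_id).eventually h,
    eventually_gt_atTop 0] with y hy hy0
  have hy0 : (y : ℂ) ≠ 0 := by exact_mod_cast hy0.ne'
  simp only [id, Complex.ofReal_add, Complex.ofReal_neg, Complex.ofReal_one,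
    neg_add_cancel_right] at hy
  simp only [Pi.mul_apply, Pi.sub_apply, eval_pow, eval_X, Complex.ofReal_neg, Complex.ofReal_one,
    hy]
  field_simp
  ring

theorem not_eventually_eq_shift_add_inv_pow (hf : EventuallyRational f) {k : ℕ} (hk : k ≠ 0) :
    ¬ ∀ᶠ x : ℝ in atTop, f x = f (x + 1) + 1 / ((x : ℂ) + 1) ^ k := by
  obtain ⟨P, Q, hPQ, hQ, hf⟩ := hf.exists_isCoprime
  intro h
  refine sub_comp_mul_pow_ne hk hQ hPQ (eq_of_eventually_eval_ofReal_eq ?_)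
  have hshift := tendsto_atTop_add_const_right atTop (1 : ℝ) tendsto_id
  filter_upwards [h, hf, hshift.eventually hf, eventually_eval_ofReal_ne_zero hQ,
    hshift.eventually (eventually_eval_ofReal_ne_zero hQ), eventually_ge_atTop 0]
    with x h hx hx1 hQx hQx1 hx0
  have hx1' : (x : ℂ) + 1 ≠ 0 := by exact_mod_cast (by linarith : x + 1 ≠ 0)
  simp only [id, Complex.ofReal_add, Complex.ofReal_one] at hx1 hQx1
  simp only [eval_mul, eval_sub, eval_pow, eval_add, eval_X, eval_one, eval_comp]
  rw [hx, hx1] at h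
  field_simp at h
  linear_combination h

end EventuallyRational

theorem not_eventuallyRational_hurwitzMultizeta {r : ℕ} {c : Fin (r + 1) → ℕ}
    (hc : ∀ i, 1 ≤ c i) (h0 : 2 ≤ c 0) : ¬ EventuallyRational (hurwitzMultizeta c) := by
  induction r with
  | zero =>
    refine fun hF => hF.not_eventually_eq_shift_add_inv_pow (k := c 0) (by omega) ?_
    simpa [hurwitzMultizeta_fin_zero] using eventually_hurwitzMultizeta_eq_shift_add hc h0
  | succ r ih =>
    exact fun hF => ih (c := Fin.init c) (fun i => hc _) h0
      (hF.of_eventually_eq_shift_add (eventually_hurwitzMultizeta_eq_shift_add hc h0))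

theorem inOmega_ofReal {x : ℝ} (hx : 0 ≤ x) : InOmega x := fun k hk => by
  have := congrArg Complex.re hk
  simp at this
  linarith

/-- no nonempty admissible Hurwitz multizeta function is a rational
function. -/
theorem hurwitzMultizeta_not_rational (s : List ℕ) (hr : s ≠ [])
    (h1 : ∀ k ∈ s, 1 ≤ k) (h2 : 2 ≤ s.head hr) :
    ¬ ∃ G : RatFunc ℂ, ∀ z : ℂ, InOmega z → Polynomial.eval z G.denom ≠ 0 →
      He s z = G.eval (RingHom.id ℂ) z := by
  obtain ⟨a, l, rfl⟩ := List.exists_cons_of_ne_nil hr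
  rintro ⟨G, hG⟩
  refine not_eventuallyRational_hurwitzMultizeta (c := (a :: l).get)
    (fun i => h1 _ (List.get_mem _ _)) h2 ⟨G.num, G.denom, G.denom_ne_zero, ?_⟩
  filter_upwards [eventually_ge_atTop 0, eventually_eval_ofReal_ne_zero G.denom_ne_zero]
    with x hx hden
  rw [← he_eq_hurwitzMultizeta, hG x (inOmega_ofReal hx) hden, RatFunc.eval, eval₂_id,
    eval₂_id]
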